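/- arXiv:2412.04368 — 4 statements merged into one kernel-verified Lean document; each statement's English description precedes it below -/
import Mathlib

section
/- Let S be a finite nonempty set, let ρ : S → ℝ satisfy ρ(s) > 0 for all s, and let d be a positive integer. Let ζ : (S → ℝ) → ℝᵈ be a three-times continuously differentiable function (viewing S → ℝ as ℝ^{#S}) with ζ(0) = 0. Then there exist a function B₁ : S → (S → ℝ) and a continuous function B₂ : S → (S → ℝ) → ℝᵈ such that for every r : S → ℝ, setting z₁ := Σ_{s ∈ S} ρ(s) r(s) B₁(s), one has ζ(r) = Σ_{s ∈ S} ρ(s) r(s) B₂(s, z₁). (Two levels of auto-regressive features exactly represent any smooth task encoding vanishing at 0.) -/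
/-- Two levels of auto-regressive features exactly represent any smooth
task encoding `ζ : ℝ^{#S} → ℝᵈ` vanishing at `0`: there are `B₁ : S → ℝ^{#S}`
and continuous `B₂ : S → ℝ^{#S} → ℝᵈ` such that for every reward `r`,
setting `z₁ = Σ_s ρ(s) r(s) B₁(s)`, we have `ζ(r) = Σ_s ρ(s) r(s) B₂(s, z₁)`. -/
theorem stmt_3 (S : Type) [Fintype S] [Nonempty S]
    (ρ : S → ℝ) (hρ : ∀ s, 0 < ρ s) (d : ℕ) (hd : 0 < d)
    (ζ : (S → ℝ) → (Fin d → ℝ)) (hζ : ContDiff ℝ 3 ζ) (hζ0 : ζ 0 = 0) :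
    ∃ (B₁ : S → (S → ℝ)) (B₂ : S → (S → ℝ) → (Fin d → ℝ)),
      (∀ s, Continuous (B₂ s)) ∧
      ∀ r : S → ℝ,
        ζ r = ∑ s, (ρ s * r s) • B₂ s (∑ s', (ρ s' * r s') • B₁ s') := by
  classical
  have hdiff : Differentiable ℝ ζ := hζ.differentiable (by norm_num)
  have hfc : Continuous (fderiv ℝ ζ) := (hζ.fderiv_right (m := 2) (by norm_num)).continuous
  set e : S → (S → ℝ) := fun s s' => if s = s' then (1 : ℝ) else 0 with he
  set g : S → (S → ℝ) → (Fin d → ℝ) :=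
    fun s r => ∫ t in (0:ℝ)..1, fderiv ℝ ζ (t • r) (e s) with hg
  have hgc : ∀ s, Continuous (g s) := by
    intro s
    apply intervalIntegral.continuous_parametric_intervalIntegral_of_continuous'
    exact (ContinuousLinearMap.apply ℝ (Fin d → ℝ) (e s)).continuous.comp
      (hfc.comp ((continuous_snd).smul continuous_fst))
  refine ⟨fun s => (ρ s)⁻¹ • e s, fun s r => (ρ s)⁻¹ • g s r, fun s => (Continuous.smul (f := fun _ => (ρ s)⁻¹) continuous_const (hgc s)), fun r => ?_⟩
  have hz : (∑ s', (ρ s' * r s') • ((ρ s')⁻¹ • e s')) = r := by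
    have : ∀ s', (ρ s' * r s') • ((ρ s')⁻¹ • e s') = r s' • e s' := by
      intro s'
      rw [smul_smul, mul_comm (ρ s'), mul_assoc, mul_inv_cancel₀ (hρ s').ne', mul_one]
    rw [Finset.sum_congr rfl (fun s' _ => this s')]
    exact (pi_eq_sum_univ r).symm
  rw [hz]
  have hcoef : ∀ s, (ρ s * r s) • ((ρ s)⁻¹ • g s r) = r s • g s r := by
    intro s
    rw [smul_smul, mul_comm (ρ s), mul_assoc, mul_inv_cancel₀ (hρ s).ne', mul_one]
  rw [Finset.sum_congr rfl (fun s _ => hcoef s)]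
  -- main identity: ζ r = ∑ s, r s • g s r
  have hderiv : ∀ t ∈ Set.uIcc (0:ℝ) 1,
      HasDerivAt (fun t : ℝ => ζ (t • r)) (fderiv ℝ ζ (t • r) r) t := by
    intro t _
    have h1 : HasDerivAt (fun t : ℝ => t • r) r t := by
      simpa using (hasDerivAt_id t).smul_const r
    exact ((hdiff (t • r)).hasFDerivAt.comp_hasDerivAt t h1)
  have hint : IntervalIntegrable (fun t : ℝ => fderiv ℝ ζ (t • r) r) MeasureTheory.volume 0 1 := by
    apply Continuous.intervalIntegrable
    exact (ContinuousLinearMap.apply ℝ (Fin d → ℝ) r).continuous.comp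
      (hfc.comp (continuous_id.smul continuous_const))
  have hftc : ζ r - ζ 0 = ∫ t in (0:ℝ)..1, fderiv ℝ ζ (t • r) r := by
    rw [intervalIntegral.integral_eq_sub_of_hasDerivAt (fun t ht => hderiv t ht) hint]
    simp
  have hexp : ∀ t : ℝ, fderiv ℝ ζ (t • r) r = ∑ s, r s • fderiv ℝ ζ (t • r) (e s) := by
    intro t
    have hr : (∑ s, r s • e s) = r := (pi_eq_sum_univ r).symm
    set L := fderiv ℝ ζ (t • r)
    calc L r = L (∑ s, r s • e s) := by rw [hr]
      _ = ∑ s, r s • L (e s) := by rw [map_sum]; simp only [map_smul]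
  have hswap : (∫ t in (0:ℝ)..1, fderiv ℝ ζ (t • r) r)
      = ∑ s, r s • g s r := by
    simp_rw [hexp]
    rw [intervalIntegral.integral_finset_sum]
    · congr 1
      ext s
      rw [intervalIntegral.integral_smul]
    · intro s _
      apply Continuous.intervalIntegrable
      exact Continuous.smul (f := fun _ => r s) continuous_const ((ContinuousLinearMap.apply ℝ (Fin d → ℝ) (e s)).continuous.comp
        (hfc.comp (continuous_id.smul continuous_const)))
  rw [← hswap, ← hftc, hζ0, sub_zero]
end

section
/- Let S and A be finite nonempty sets, let P : S × A × S → ℝ satisfy P(s,a,s′) ≥ 0 and Σ_{s′} P(s,a,s′) = 1 for all (s,a), and let 0 < γ < 1 and d be a positive integer. Let F : S × A × ℝᵈ → ℝᵈ, B : S × ℝᵈ → ℝᵈ, and ρ : S → ℝ. For each z ∈ ℝᵈ, let π_z : S → A be a policy with π_z(s) ∈ argmax_{a ∈ A} ⟨F(s,a,z), z⟩ for every s, and suppose the finite-rank model M_z(s,a,s′) := ⟨F(s,a,z), B(s′,z)⟩ ρ(s′) satisfies, for all z, s, a, s′, the successor-measure Bellman equation M_z(s,a,s′) = γ P(s,a,s′)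 + γ Σ_{s″} P(s,a,s″) M_z(s″, π_z(s″), s′). Then for every reward function r : S → ℝ and every z_r ∈ ℝᵈ satisfying the fixed-point equation z_r = Σ_{s} ρ(s) r(s) B(s, z_r), the function Q(s,a) := ⟨F(s,a,z_r), z_r⟩ satisfies the Bellman optimality equation Q(s,a) = γ Σ_{s′} P(s,a,s′) ( r(s′) + max_{a′ ∈ A} Q(s′,a′) ) for all (s,a), and π_{z_r}(s) ∈ argmax_{a} Q(s,a) for all s; hence π_{z_r} is an optimal policy for reward r. -/
/-- Forward-backward representations yield optimal policies: if the
finite-rank model `M_z(s,a,s') = ⟨F(s,a,z), B(s',z)⟩ ρ(s')` satisfies the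
successor-measure Bellman equation for the greedy policies `π_z`, then for
any reward `r` and any `z_r` with `z_r = Σ_s ρ(s) r(s) B(s,z_r)`, the
function `Q(s,a) = ⟨F(s,a,z_r), z_r⟩` satisfies the Bellman optimality
equation for `r`, and `π_{z_r}` is greedy for `Q`; hence `π_{z_r}` is an
optimal policy for `r`. -/
theorem stmt_6 (S A : Type) [Fintype S] [Nonempty S] [Fintype A] [Nonempty A]
    (P : S → A → S → ℝ) (hP0 : ∀ s a s', 0 ≤ P s a s')
    (hP1 : ∀ s a, ∑ s', P s a s' = 1)
    (γ : ℝ) (hγ0 : 0 < γ) (hγ1 : γ < 1) (d : ℕ) (hd : 0 < d)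
    (F : S → A → (Fin d → ℝ) → (Fin d → ℝ))
    (B : S → (Fin d → ℝ) → (Fin d → ℝ)) (ρ : S → ℝ)
    (π : (Fin d → ℝ) → S → A)
    (hπ : ∀ z s a, (∑ i, F s a z i * z i) ≤ ∑ i, F s (π z s) z i * z i)
    (hM : ∀ z s a s',
      (∑ i, F s a z i * B s' z i) * ρ s' =
        γ * P s a s' +
          γ * ∑ s'', P s a s'' * ((∑ i, F s'' (π z s'') z i * B s' z i) * ρ s'))
    (r : S → ℝ) (zr : Fin d → ℝ)
    (hzr : ∀ i, zr i = ∑ s, ρ s * r s * B s zr i) :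
    (∀ s a, (∑ i, F s a zr i * zr i) =
        γ * ∑ s', P s a s' *
          (r s' + Finset.univ.sup' Finset.univ_nonempty
            (fun a' => ∑ i, F s' a' zr i * zr i))) ∧
    (∀ s a, (∑ i, F s a zr i * zr i) ≤ ∑ i, F s (π zr s) zr i * zr i) := by
  -- Q(s,a) = Σ_{s'} M(s,a,s') r(s')
  have key : ∀ s a, (∑ i, F s a zr i * zr i)
      = ∑ s', ((∑ i, F s a zr i * B s' zr i) * ρ s') * r s' := by
    intro s a
    calc (∑ i, F s a zr i * zr i)
        = ∑ i, F s a zr i * ∑ s', ρ s' * r s' * B s' zr i :=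
          Finset.sum_congr rfl fun i _ => by rw [← hzr i]
      _ = ∑ i, ∑ s', F s a zr i * (ρ s' * r s' * B s' zr i) := by
          simp [Finset.mul_sum]
      _ = ∑ s', ∑ i, F s a zr i * (ρ s' * r s' * B s' zr i) := Finset.sum_comm
      _ = ∑ s', ((∑ i, F s a zr i * B s' zr i) * ρ s') * r s' := by
          refine Finset.sum_congr rfl fun s' _ => ?_
          rw [Finset.sum_mul, Finset.sum_mul]
          exact Finset.sum_congr rfl fun i _ => by ring
  have hsup : ∀ s', (Finset.univ.sup' Finset.univ_nonempty
      (fun a' => ∑ i, F s' a' zr i * zr i)) = ∑ i, F s' (π zr s') zr i * zr i := by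
    intro s'
    refine le_antisymm (Finset.sup'_le _ _ fun a' _ => hπ zr s' a')
      (Finset.le_sup' (fun a' => ∑ i, F s' a' zr i * zr i) (Finset.mem_univ (π zr s')))
  refine ⟨fun s a => ?_, fun s a => hπ zr s a⟩
  calc (∑ i, F s a zr i * zr i)
      = ∑ s', ((∑ i, F s a zr i * B s' zr i) * ρ s') * r s' := key s a
    _ = ∑ s', (γ * P s a s' +
          γ * ∑ s'', P s a s'' * ((∑ i, F s'' (π zr s'') zr i * B s' zr i) * ρ s')) * r s' :=
        Finset.sum_congr rfl fun s' _ => by rw [hM zr s a s']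
    _ = γ * ∑ s', P s a s' * r s'
        + γ * ∑ s'', P s a s'' *
            ∑ s', ((∑ i, F s'' (π zr s'') zr i * B s' zr i) * ρ s') * r s' := by
        have step : ∑ s', (γ * P s a s' +
            γ * ∑ s'', P s a s'' * ((∑ i, F s'' (π zr s'') zr i * B s' zr i) * ρ s')) * r s'
          = ∑ s', (γ * (P s a s' * r s'))
            + ∑ s', ∑ s'', γ * (P s a s'' *
                (((∑ i, F s'' (π zr s'') zr i * B s' zr i) * ρ s') * r s')) := by
          rw [← Finset.sum_add_distrib]
          refine Finset.sum_congr rfl fun s' _ => ?_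
          rw [add_mul, Finset.mul_sum, Finset.sum_mul]
          congr 1
          · ring
          · exact Finset.sum_congr rfl fun s'' _ => by ring
        rw [step, Finset.sum_comm, ← Finset.mul_sum]
        congr 1
        rw [Finset.mul_sum]
        refine Finset.sum_congr rfl fun s'' _ => ?_
        rw [Finset.mul_sum, Finset.mul_sum]
    _ = γ * ∑ s', P s a s' * (r s' + Finset.univ.sup' Finset.univ_nonempty
            (fun a' => ∑ i, F s' a' zr i * zr i)) := by
        rw [Finset.mul_sum, Finset.mul_sum, Finset.mul_sum, ← Finset.sum_add_distrib]
        refine Finset.sum_congr rfl fun s' _ => ?_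
        rw [hsup s', ← key s' (π zr s')]
        ring
end

section
/- Let S and A be finite nonempty sets, P : S × A × S → ℝ a row-stochastic transition kernel, 0 < γ < 1, and d a positive integer. Let G be a finite set (the goal space), φ : S → G a goal map, and ρ : G → ℝ a weight function on goals. Let F : S × A × ℝᵈ → ℝᵈ, B : G × ℝᵈ → ℝᵈ, and m̄ : S × ℝᵈ × G → ℝ. For each z ∈ ℝᵈ, let π_z : S → A satisfy π_z(s) ∈ argmax_{a} ⟨F(s,a,z), z⟩, and suppose the extended model M_z(s,a,g) := (⟨F(s,a,z), B(g,z)⟩ + m̄(s,z,g)) ρ(g) satisfies, for all z, s, a, g, the goal-space successor-measure Bellman equation M_z(s,a,g) = γ Σ_{s′} P(s,a,s′) ( 𝟙[φ(s′) = g] + M_z(s′, π_z(s′), g) ). Then for every reward function r : G → ℝ and every z_R ∈ ℝᵈ satisfying z_R = Σ_{g ∈ G} r(g) B(g, z_R) ρ(g), the function Q(s,a) := ⟨F(s,a,z_R), z_R⟩ + Σ_{g ∈ G} m̄(s, z_R, g) r(g) ρ(g) satisfies the Bellman optimality equation Q(s,a) = γ Σ_{s′} P(s,a,s′) ( r(φ(s′))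 + max_{a′} Q(s′,a′) ) for all (s,a), and π_{z_R}(s) ∈ argmax_{a} Q(s,a) for all s; hence π_{z_R} is an optimal policy for the reward R(s) = r(φ(s)). -/
/-- Extended forward-backward representations with a goal space: if the
extended model `M_z(s,a,g) = (⟨F(s,a,z), B(g,z)⟩ + m̄(s,z,g)) ρ(g)` satisfies
the goal-space successor-measure Bellman equation for the greedy policies
`π_z`, then for any reward `r : G → ℝ` and any `z_R` with
`z_R = Σ_g r(g) B(g,z_R) ρ(g)`, the function
`Q(s,a) = ⟨F(s,a,z_R), z_R⟩ + Σ_g m̄(s,z_R,g) r(g) ρ(g)` satisfies the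
Bellman optimality equation for the reward `R(s) = r(φ(s))`, and `π_{z_R}`
is greedy for `Q`; hence `π_{z_R}` is optimal for `R`. -/
theorem stmt_7 (S A G : Type) [Fintype S] [Nonempty S] [Fintype A] [Nonempty A]
    [Fintype G] [DecidableEq G]
    (P : S → A → S → ℝ) (hP0 : ∀ s a s', 0 ≤ P s a s')
    (hP1 : ∀ s a, ∑ s', P s a s' = 1)
    (γ : ℝ) (hγ0 : 0 < γ) (hγ1 : γ < 1) (d : ℕ) (hd : 0 < d)
    (φ : S → G) (ρ : G → ℝ)
    (F : S → A → (Fin d → ℝ) → (Fin d → ℝ))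
    (B : G → (Fin d → ℝ) → (Fin d → ℝ))
    (mbar : S → (Fin d → ℝ) → G → ℝ)
    (π : (Fin d → ℝ) → S → A)
    (hπ : ∀ z s a, (∑ i, F s a z i * z i) ≤ ∑ i, F s (π z s) z i * z i)
    (hM : ∀ z s a g,
      ((∑ i, F s a z i * B g z i) + mbar s z g) * ρ g =
        γ * ∑ s', P s a s' *
          ((if φ s' = g then (1 : ℝ) else 0) +
            ((∑ i, F s' (π z s') z i * B g z i) + mbar s' z g) * ρ g))
    (r : G → ℝ) (zR : Fin d → ℝ)
    (hzR : ∀ i, zR i = ∑ g, r g * B g zR i * ρ g)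
    (Q : S → A → ℝ)
    (hQ : ∀ s a, Q s a =
      (∑ i, F s a zR i * zR i) + ∑ g, mbar s zR g * r g * ρ g) :
    (∀ s a, Q s a =
        γ * ∑ s', P s a s' *
          (r (φ s') + Finset.univ.sup' Finset.univ_nonempty (fun a' => Q s' a'))) ∧
    (∀ s a, Q s a ≤ Q s (π zR s)) := by
  have hGreedy : ∀ s a, Q s a ≤ Q s (π zR s) := by
    intro s a
    rw [hQ, hQ]
    exact add_le_add_left (hπ zR s a) _
  have hQM : ∀ s a, Q s a =
      ∑ g, (((∑ i, F s a zR i * B g zR i) + mbar s zR g) * ρ g) * r g := by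
    intro s a
    rw [hQ]
    have h1 : (∑ i, F s a zR i * zR i)
        = ∑ g, (∑ i, F s a zR i * B g zR i) * (ρ g * r g) := by
      calc (∑ i, F s a zR i * zR i)
          = ∑ i, ∑ g, F s a zR i * (r g * B g zR i * ρ g) := by
            refine Finset.sum_congr rfl fun i _ => ?_
            rw [hzR i, Finset.mul_sum]
        _ = ∑ g, ∑ i, F s a zR i * (r g * B g zR i * ρ g) := Finset.sum_comm
        _ = _ := by
            refine Finset.sum_congr rfl fun g _ => ?_
            rw [Finset.sum_mul]
            exact Finset.sum_congr rfl fun i _ => by ring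
    rw [h1, ← Finset.sum_add_distrib]
    exact Finset.sum_congr rfl fun g _ => by ring
  have hsup : ∀ s, Finset.univ.sup' Finset.univ_nonempty (fun a' => Q s a')
      = Q s (π zR s) := by
    intro s
    refine le_antisymm (Finset.sup'_le _ _ fun a _ => hGreedy s a)
      (Finset.le_sup' _ (Finset.mem_univ _))
  refine ⟨fun s a => ?_, hGreedy⟩
  rw [hQM]
  calc ∑ g, (((∑ i, F s a zR i * B g zR i) + mbar s zR g) * ρ g) * r g
      = ∑ g, (γ * ∑ s', P s a s' *
          ((if φ s' = g then (1 : ℝ) else 0) +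
            ((∑ i, F s' (π zR s') zR i * B g zR i) + mbar s' zR g) * ρ g)) * r g := by
        exact Finset.sum_congr rfl fun g _ => by rw [hM]
    _ = γ * ∑ s', ∑ g, P s a s' *
          (((if φ s' = g then (1 : ℝ) else 0) +
            ((∑ i, F s' (π zR s') zR i * B g zR i) + mbar s' zR g) * ρ g) * r g) := by
        have h2 : ∀ g, (γ * ∑ s', P s a s' *
            ((if φ s' = g then (1 : ℝ) else 0) +
              ((∑ i, F s' (π zR s') zR i * B g zR i) + mbar s' zR g) * ρ g)) * r g
            = γ * ∑ s', P s a s' *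
              (((if φ s' = g then (1 : ℝ) else 0) +
                ((∑ i, F s' (π zR s') zR i * B g zR i) + mbar s' zR g) * ρ g) * r g) := by
          intro g
          rw [mul_assoc, Finset.sum_mul]
          congr 1
          exact Finset.sum_congr rfl fun s' _ => by ring
        rw [Finset.sum_congr rfl fun g _ => h2 g, ← Finset.mul_sum, Finset.sum_comm]
    _ = γ * ∑ s', P s a s' *
          (r (φ s') + Finset.univ.sup' Finset.univ_nonempty (fun a' => Q s' a')) := by
        congr 1
        refine Finset.sum_congr rfl fun s' _ => ?_
        rw [← Finset.mul_sum]
        congr 1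
        have hsplit : ∑ g, (((if φ s' = g then (1 : ℝ) else 0) +
            ((∑ i, F s' (π zR s') zR i * B g zR i) + mbar s' zR g) * ρ g) * r g)
            = (∑ g, (if φ s' = g then (1 : ℝ) else 0) * r g)
              + ∑ g, (((∑ i, F s' (π zR s') zR i * B g zR i) + mbar s' zR g) * ρ g) * r g := by
          rw [← Finset.sum_add_distrib]
          exact Finset.sum_congr rfl fun g _ => by ring
        rw [hsplit, hsup s', ← hQM s' (π zR s')]
        congr 1
        simp
end

section
/- Let d ≥ 1 and let ℝᵈ be partitioned into K consecutive coordinate blocks of sizes d₁, …, d_K (so d₁ + ⋯ + d_K = d); for z ∈ ℝᵈ write z_k for its k-th block and z_{1:k} for the concatenation of its first k blocks. Define the residual auto-regressive normalization f_r on the set of z whose first block z₁ is nonzero by f_r(z)_k = √(d₁ + ⋯ + d_k) · z_k / ‖z_{1:k}‖ for each k = 1, …, K. Then for all z, z′ ∈ ℝᵈ with z₁ ≠ 0 and z′₁ ≠ 0, one has f_r(z) = f_r(z′) if and only if z/‖z‖ = z′/‖z′‖. (The residual auto-regressive normalization is a bijective encoding of the direction of z.) -/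
/-- The residual auto-regressive normalization
`f_r(z)_k = √(d₁+⋯+d_k) · z_k / ‖z_{1:k}‖` is a bijective encoding of the
direction of `z`: for `z, z'` with nonzero first block,
`f_r(z) = f_r(z')` iff `z/‖z‖ = z'/‖z'‖`. -/
theorem stmt_10 (K : ℕ) (hK : 0 < K) (dsz : Fin K → ℕ)
    (hd : 1 ≤ ∑ k, dsz k)
    (z z' : ∀ k : Fin K, EuclideanSpace ℝ (Fin (dsz k)))
    (hz : z ⟨0, hK⟩ ≠ 0) (hz' : z' ⟨0, hK⟩ ≠ 0) :
    ((fun k => (Real.sqrt (∑ j ∈ Finset.Iic k, (dsz j : ℝ)) /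
        Real.sqrt (∑ j ∈ Finset.Iic k, ‖z j‖ ^ 2)) • z k) =
      (fun k => (Real.sqrt (∑ j ∈ Finset.Iic k, (dsz j : ℝ)) /
        Real.sqrt (∑ j ∈ Finset.Iic k, ‖z' j‖ ^ 2)) • z' k)) ↔
      (Real.sqrt (∑ k, ‖z k‖ ^ 2))⁻¹ • z =
        (Real.sqrt (∑ k, ‖z' k‖ ^ 2))⁻¹ • z' := by
  -- abbreviations
  set S : Fin K → ℝ := fun k => ∑ j ∈ Finset.Iic k, ‖z j‖ ^ 2 with hSdef
  set S' : Fin K → ℝ := fun k => ∑ j ∈ Finset.Iic k, ‖z' j‖ ^ 2 with hS'def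
  have h0mem : ∀ k : Fin K, (⟨0, hK⟩ : Fin K) ∈ Finset.Iic k := by
    intro k; exact Finset.mem_Iic.2 (by simp [Fin.le_def])
  have Spos : ∀ k, 0 < S k := by
    intro k
    exact Finset.sum_pos' (fun j _ => by positivity)
      ⟨⟨0, hK⟩, h0mem k, pow_pos (norm_pos_iff.2 hz) 2⟩
  have S'pos : ∀ k, 0 < S' k := by
    intro k
    exact Finset.sum_pos' (fun j _ => by positivity)
      ⟨⟨0, hK⟩, h0mem k, pow_pos (norm_pos_iff.2 hz') 2⟩
  have hd0 : 0 < dsz ⟨0, hK⟩ := by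
    rcases Nat.eq_zero_or_pos (dsz ⟨0, hK⟩) with h | h
    · exact absurd (by ext i; exact absurd i.isLt (by omega)) hz
    · exact h
  have Dpos : ∀ k : Fin K, 0 < ∑ j ∈ Finset.Iic k, (dsz j : ℝ) := by
    intro k
    exact Finset.sum_pos' (fun j _ => by positivity)
      ⟨⟨0, hK⟩, h0mem k, by exact_mod_cast hd0⟩
  -- last element
  have klastlt : K - 1 < K := by omega
  set klast : Fin K := ⟨K - 1, klastlt⟩ with hklast
  have hunivIic : (Finset.univ : Finset (Fin K)) = Finset.Iic klast := by
    ext j; simp only [Finset.mem_univ, Finset.mem_Iic, true_iff]; show j.val ≤ K - 1; have := j.isLt; omega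
  have hStot : (∑ k, ‖z k‖ ^ 2) = S klast := by rw [hunivIic]
  have hStot' : (∑ k, ‖z' k‖ ^ 2) = S' klast := by rw [hunivIic]
  constructor
  · intro h
    -- per-block equality without the √D factor
    have hc : ∀ k, (Real.sqrt (S k))⁻¹ • z k = (Real.sqrt (S' k))⁻¹ • z' k := by
      intro k
      have hk := congrFun h k
      simp only [div_eq_mul_inv, ← smul_smul] at hk
      exact smul_right_injective _ (ne_of_gt (Real.sqrt_pos.2 (Dpos k))) hk
    -- norm relation
    have hkey : ∀ k, ‖z k‖ ^ 2 * S' k = ‖z' k‖ ^ 2 * S k := by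
      intro k
      have := congrArg norm (hc k)
      rw [norm_smul, norm_smul] at this
      have h1 : |(Real.sqrt (S k))⁻¹| = (Real.sqrt (S k))⁻¹ := abs_of_nonneg (by positivity)
      have h2 : |(Real.sqrt (S' k))⁻¹| = (Real.sqrt (S' k))⁻¹ := abs_of_nonneg (by positivity)
      simp only [Real.norm_eq_abs, h1, h2] at this
      have h3 := congrArg (fun t => t ^ 2) this
      simp only [mul_pow, inv_pow, Real.sq_sqrt (Spos k).le, Real.sq_sqrt (S'pos k).le] at h3
      rw [inv_mul_eq_div, inv_mul_eq_div,
        div_eq_div_iff (Spos k).ne' (S'pos k).ne'] at h3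
      exact h3
    -- ratio constancy by induction
    have A : ∀ i, ∀ hi : i < K,
        S' ⟨0, hK⟩ * S ⟨i, hi⟩ = S ⟨0, hK⟩ * S' ⟨i, hi⟩ := by
      intro i
      induction i with
      | zero => intro hi; ring
      | succ n ih =>
        intro hi
        have hn : n < K := by omega
        have hIic : Finset.Iic (⟨n + 1, hi⟩ : Fin K)
            = insert (⟨n + 1, hi⟩ : Fin K) (Finset.Iic ⟨n, hn⟩) := by
          ext j; simp [Fin.le_def, Fin.ext_iff]; omega
        have hnotmem : (⟨n + 1, hi⟩ : Fin K) ∉ Finset.Iic (⟨n, hn⟩ : Fin K) := by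
          simp [Fin.le_def]
        have hS : S ⟨n + 1, hi⟩ = ‖z ⟨n + 1, hi⟩‖ ^ 2 + S ⟨n, hn⟩ := by
          simp only [hSdef, hIic, Finset.sum_insert hnotmem]
        have hS' : S' ⟨n + 1, hi⟩ = ‖z' ⟨n + 1, hi⟩‖ ^ 2 + S' ⟨n, hn⟩ := by
          simp only [hS'def, hIic, Finset.sum_insert hnotmem]
        have key := hkey ⟨n + 1, hi⟩
        rw [hS, hS'] at key ⊢
        set a := S ⟨n, hn⟩
        set a' := S' ⟨n, hn⟩
        set b := ‖z ⟨n + 1, hi⟩‖ ^ 2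
        set b' := ‖z' ⟨n + 1, hi⟩‖ ^ 2
        have ih' := ih hn
        -- key : b * (b' + a') = b' * (b + a), so b * a' = b' * a
        have hba : b * a' = b' * a := by nlinarith [key]
        have ha' : a' ≠ 0 := (S'pos ⟨n, hn⟩).ne'
        have hb : S' ⟨0, hK⟩ * b = S ⟨0, hK⟩ * b' := by
          have : (S' ⟨0, hK⟩ * b) * a' = (S ⟨0, hK⟩ * b') * a' := by
            calc (S' ⟨0, hK⟩ * b) * a' = S' ⟨0, hK⟩ * (b * a') := by ring
            _ = S' ⟨0, hK⟩ * (b' * a) := by rw [hba]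
            _ = b' * (S' ⟨0, hK⟩ * a) := by ring
            _ = b' * (S ⟨0, hK⟩ * a') := by rw [ih']
            _ = (S ⟨0, hK⟩ * b') * a' := by ring
          exact mul_right_cancel₀ ha' this
        nlinarith [hb, ih']
    have A' : ∀ k : Fin K, S' ⟨0, hK⟩ * S k = S ⟨0, hK⟩ * S' k := by
      intro k
      have := A k.val k.isLt
      simpa using this
    -- cross ratio with total
    have cross : ∀ k : Fin K, S k * S' klast = S' k * S klast := by
      intro k
      have h1 := A' k
      have h2 := A' klast
      have hS'0 : S' ⟨0, hK⟩ ≠ 0 := (S'pos _).ne'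
      have : S' ⟨0, hK⟩ * (S k * S' klast) = S' ⟨0, hK⟩ * (S' k * S klast) := by
        calc S' ⟨0, hK⟩ * (S k * S' klast) = (S' ⟨0, hK⟩ * S k) * S' klast := by ring
        _ = (S ⟨0, hK⟩ * S' k) * S' klast := by rw [h1]
        _ = S' k * (S ⟨0, hK⟩ * S' klast) := by ring
        _ = S' k * (S' ⟨0, hK⟩ * S klast) := by rw [h2]
        _ = S' ⟨0, hK⟩ * (S' k * S klast) := by ring
      exact mul_left_cancel₀ hS'0 this
    funext k
    simp only [Pi.smul_apply]
    rw [hStot, hStot']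
    have hsk : Real.sqrt (S k) ≠ 0 := (Real.sqrt_pos.2 (Spos k)).ne'
    have hsk' : Real.sqrt (S' k) ≠ 0 := (Real.sqrt_pos.2 (S'pos k)).ne'
    have hscalar : Real.sqrt (S k) / Real.sqrt (S klast)
        = Real.sqrt (S' k) / Real.sqrt (S' klast) := by
      rw [div_eq_div_iff (Real.sqrt_pos.2 (Spos klast)).ne' (Real.sqrt_pos.2 (S'pos klast)).ne']
      rw [← Real.sqrt_mul (Spos k).le, ← Real.sqrt_mul (S'pos k).le]
      rw [cross k]
    have hx1 : Real.sqrt (S k) / Real.sqrt (S klast) * (Real.sqrt (S k))⁻¹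
        = (Real.sqrt (S klast))⁻¹ := by
      rw [div_mul_eq_mul_div, mul_inv_cancel₀ hsk, one_div]
    have hx2 : Real.sqrt (S' k) / Real.sqrt (S' klast) * (Real.sqrt (S' k))⁻¹
        = (Real.sqrt (S' klast))⁻¹ := by
      rw [div_mul_eq_mul_div, mul_inv_cancel₀ hsk', one_div]
    calc (Real.sqrt (S klast))⁻¹ • z k
        = (Real.sqrt (S k) / Real.sqrt (S klast)) • ((Real.sqrt (S k))⁻¹ • z k) := by
          rw [smul_smul, hx1]
      _ = (Real.sqrt (S' k) / Real.sqrt (S' klast)) • ((Real.sqrt (S' k))⁻¹ • z' k) := by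
          rw [hscalar, hc k]
      _ = (Real.sqrt (S' klast))⁻¹ • z' k := by
          rw [smul_smul, hx2]
  · intro h
    funext k
    have hk := congrFun h k
    simp only [Pi.smul_apply] at hk
    rw [hStot, hStot'] at hk
    have hst : Real.sqrt (S klast) ≠ 0 := (Real.sqrt_pos.2 (Spos klast)).ne'
    have hst' : Real.sqrt (S' klast) ≠ 0 := (Real.sqrt_pos.2 (S'pos klast)).ne'
    -- z j = c • z' j with c = √St/√St'
    obtain ⟨c, hc⟩ : ∃ c : ℝ, c = Real.sqrt (S klast) / Real.sqrt (S' klast) := ⟨_, rfl⟩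
    have hcpos : 0 < c := by
      rw [hc]
      exact div_pos (Real.sqrt_pos.2 (Spos klast)) (Real.sqrt_pos.2 (S'pos klast))
    have hzc : ∀ j : Fin K, z j = c • z' j := by
      intro j
      have hj := congrFun h j
      simp only [Pi.smul_apply] at hj
      rw [hStot, hStot'] at hj
      have := congrArg (fun v => Real.sqrt (S klast) • v) hj
      simp only [smul_smul] at this
      rw [mul_inv_cancel₀ hst, one_smul] at this
      rw [this, hc, div_eq_mul_inv]
    -- hence S k = c^2 * S' k
    have hSc : ∀ j : Fin K, S j = c ^ 2 * S' j := by
      intro j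
      simp only [hSdef, hS'def]
      rw [Finset.mul_sum]
      refine Finset.sum_congr rfl fun i _ => ?_
      rw [hzc i, norm_smul, Real.norm_eq_abs, abs_of_pos hcpos, mul_pow]
    have hs'k : Real.sqrt (S' k) ≠ 0 := (Real.sqrt_pos.2 (S'pos k)).ne'
    have hsqS : Real.sqrt (S k) = c * Real.sqrt (S' k) := by
      rw [hSc k, Real.sqrt_mul (by positivity), Real.sqrt_sq hcpos.le]
    have hy : Real.sqrt (∑ j ∈ Finset.Iic k, (dsz j : ℝ)) / (c * Real.sqrt (S' k)) * c
        = Real.sqrt (∑ j ∈ Finset.Iic k, (dsz j : ℝ)) / Real.sqrt (S' k) := by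
      field_simp
    rw [hzc k, hsqS, smul_smul, hy]
end
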